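/- Let 0 < M < 1, let δ satisfy 0 ≤ δ < M (so in particular δ + 1 − M > 0), let γ > 0 and 0 < r ≤ 1/2. Let ω : ℝ² \ {0} → ℝ² be C¹ and positively homogeneous of degree M (ω(λa) = λ^M ω(a) for λ > 0), and set C₀ := sup_{‖u‖=1} ‖Dω(u)‖, which is finite. Then for every k ∈ ℤ² \ {0} and every a, ā ∈ ℝ² with ‖a − ā‖ ≤ r, ‖a‖ ≥ max{1, (2C₀r/γ)^{1/(δ+1−M)}} and |ω(ā) · k| ≤ γ ‖k‖ ‖ā‖^δ, one has |ω(a) · k| ≤ 2^{δ+1} γ ‖k‖ ‖a‖^δ. That is, at points of sufficiently large norm, the r-enlargement of the resonant set {a : |ω(a)·k| ≤ γ‖k‖‖a‖^δ} is contained in the resonant set with parameter 2^{δ+1}γ. -/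

import Mathlib

/-!
Homogeneity of degree `M` makes `Dω` homogeneous of degree `M - 1`, so
`‖Dω x‖ ≤ C₀ ‖x‖^(M-1)`. On the ball of radius `r ≤ ‖a‖/2` around `a` every point has norm at
least `‖a‖/2`, so the mean value inequality gives `‖ω a - ω ā‖ ≤ 2 C₀ r ‖a‖^(M-1)`, and the
lower bound on `‖a‖` is exactly what makes this at most `γ ‖a‖^δ`. Since `‖ā‖ ≤ 2‖a‖`, the
resonance bound at `ā` then gives `|ω a · k| ≤ (2^δ + 1) γ ‖k‖ ‖a‖^δ ≤ 2^(δ+1) γ ‖k‖ ‖a‖^δ`.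
-/

open Real
open scoped RealInnerProductSpace

noncomputable section

abbrev E2 := EuclideanSpace ℝ (Fin 2)

/-- The point of `ℝ²` (with the Euclidean norm) associated to an integer vector `k ∈ ℤ²`. -/
noncomputable def kv (k : Fin 2 → ℤ) : E2 :=
  EuclideanSpace.single 0 (k 0 : ℝ) + EuclideanSpace.single 1 (k 1 : ℝ)

/-- `C₀ = sup_{‖u‖=1} ‖Dω(u)‖`. -/
noncomputable def supDeriv (ω : E2 → E2) : ℝ :=
  sSup {c : ℝ | ∃ u : E2, ‖u‖ = 1 ∧ c = ‖fderiv ℝ ω u‖}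

section Homogeneous

variable {E F : Type*} [NormedAddCommGroup E] [NormedSpace ℝ E]
  [NormedAddCommGroup F] [NormedSpace ℝ F] {ω : E → F} {M : ℝ}

theorem fderiv_smul_of_homogeneous (hω : DifferentiableOn ℝ ω {0}ᶜ)
    (hhom : ∀ t : ℝ, 0 < t → ∀ a : E, a ≠ 0 → ω (t • a) = t ^ M • ω a)
    {t : ℝ} (ht : 0 < t) {a : E} (ha : a ≠ 0) :
    fderiv ℝ ω (t • a) = t ^ (M - 1) • fderiv ℝ ω a := by
  have hta : t • a ≠ 0 := smul_ne_zero ht.ne' ha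
  have hscaled : HasFDerivAt (fun x => ω (t • x)) (t • fderiv ℝ ω (t • a)) a := by
    have := (hω.differentiableAt (isOpen_compl_singleton.mem_nhds hta)).hasFDerivAt.comp a
      ((hasFDerivAt_id a).const_smul t)
    simpa [ContinuousLinearMap.comp_smul, Function.comp_def] using this
  have hhom_near : (fun x => ω (t • x)) =ᶠ[nhds a] fun x => t ^ M • ω x := by
    filter_upwards [isOpen_compl_singleton.mem_nhds ha] with x hx using hhom t ht x hx
  have hderiv : t • fderiv ℝ ω (t • a) = t ^ M • fderiv ℝ ω a :=
    (hscaled.congr_of_eventuallyEq hhom_near.symm).unique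
      ((hω.differentiableAt (isOpen_compl_singleton.mem_nhds ha)).hasFDerivAt.const_smul _)
  rw [Real.rpow_sub_one ht.ne', div_eq_inv_mul, mul_smul, ← hderiv, smul_smul,
    inv_mul_cancel₀ ht.ne', one_smul]

theorem norm_fderiv_le_mul_rpow_of_homogeneous (hω : DifferentiableOn ℝ ω {0}ᶜ)
    (hhom : ∀ t : ℝ, 0 < t → ∀ a : E, a ≠ 0 → ω (t • a) = t ^ M • ω a)
    {C : ℝ} (hC : ∀ u : E, ‖u‖ = 1 → ‖fderiv ℝ ω u‖ ≤ C) {x : E} (hx : x ≠ 0) :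
    ‖fderiv ℝ ω x‖ ≤ C * ‖x‖ ^ (M - 1) := by
  have hnx : 0 < ‖x‖ := norm_pos_iff.mpr hx
  have hu : ‖‖x‖⁻¹ • x‖ = 1 := by rw [norm_smul, norm_inv, norm_norm, inv_mul_cancel₀ hnx.ne']
  have hx_eq : x = ‖x‖ • ‖x‖⁻¹ • x := by rw [smul_smul, mul_inv_cancel₀ hnx.ne', one_smul]
  calc ‖fderiv ℝ ω x‖ = ‖x‖ ^ (M - 1) * ‖fderiv ℝ ω (‖x‖⁻¹ • x)‖ := by
        rw [hx_eq, fderiv_smul_of_homogeneous hω hhom hnx (norm_pos_iff.mp (hu ▸ one_pos)),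
          norm_smul, ← hx_eq, Real.norm_of_nonneg (by positivity)]
    _ ≤ C * ‖x‖ ^ (M - 1) := by
        rw [mul_comm]
        exact mul_le_mul_of_nonneg_right (hC _ hu) (by positivity)

end Homogeneous

theorem norm_sub_le_of_norm_fderiv_le_mul_rpow {E F : Type*} [NormedAddCommGroup E]
    [NormedSpace ℝ E] [NormedAddCommGroup F] [NormedSpace ℝ F] {ω : E → F} {M C r : ℝ}
    (hω : DifferentiableOn ℝ ω {0}ᶜ) (hM : M ≤ 1) (hC : 0 ≤ C)
    (hbound : ∀ x : E, x ≠ 0 → ‖fderiv ℝ ω x‖ ≤ C * ‖x‖ ^ (M - 1))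
    {a b : E} (hab : ‖a - b‖ ≤ r) (hra : r < ‖a‖) :
    ‖ω a - ω b‖ ≤ C * (‖a‖ - r) ^ (M - 1) * r := by
  have hfar : ∀ x ∈ Metric.closedBall a r, ‖a‖ - r ≤ ‖x‖ := fun x hx => by
    have := norm_sub_norm_le a x
    rw [Metric.mem_closedBall, dist_eq_norm, norm_sub_rev] at hx
    linarith
  have hne : ∀ x ∈ Metric.closedBall a r, x ≠ 0 := fun x hx h0 => by
    have := hfar x hx
    rw [h0, norm_zero] at this
    linarith
  have hb : b ∈ Metric.closedBall a r := by rwa [Metric.mem_closedBall, dist_eq_norm, norm_sub_rev]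
  have ha : a ∈ Metric.closedBall a r := Metric.mem_closedBall_self ((norm_nonneg _).trans hab)
  calc ‖ω a - ω b‖ ≤ C * (‖a‖ - r) ^ (M - 1) * ‖a - b‖ :=
        (convex_closedBall a r).norm_image_sub_le_of_norm_fderiv_le
          (fun x hx => hω.differentiableAt (isOpen_compl_singleton.mem_nhds (hne x hx)))
          (fun x hx => (hbound x (hne x hx)).trans (mul_le_mul_of_nonneg_left
            (Real.rpow_le_rpow_of_nonpos (by linarith) (hfar x hx) (by linarith)) hC)) hb ha
    _ ≤ C * (‖a‖ - r) ^ (M - 1) * r := by gcongr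

theorem rpow_sub_le_two_mul_rpow {R r M : ℝ} (hrR : 2 * r ≤ R) (hR : 0 < R)
    (hM0 : 0 ≤ M) (hM1 : M ≤ 1) : (R - r) ^ (M - 1) ≤ 2 * R ^ (M - 1) :=
  calc (R - r) ^ (M - 1) ≤ (R / 2) ^ (M - 1) :=
        Real.rpow_le_rpow_of_nonpos (by positivity) (by linarith) (by linarith)
    _ = 2 ^ (1 - M) * R ^ (M - 1) := by
        rw [Real.div_rpow hR.le zero_le_two, div_eq_mul_inv, ← Real.rpow_neg zero_le_two, neg_sub,
          mul_comm]
    _ ≤ 2 * R ^ (M - 1) := by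
        gcongr
        exact Real.rpow_le_self_of_one_le one_le_two (by linarith)

theorem mul_rpow_le_of_rpow_inv_le {c γ R e : ℝ} (hc : 0 ≤ c) (hγ : 0 < γ) (hR : 0 < R)
    (he : 0 < e) (hthr : (c / γ) ^ (1 / e) ≤ R) (s : ℝ) : c * R ^ s ≤ γ * R ^ (s + e) := by
  rw [one_div, Real.rpow_inv_le_iff_of_pos (by positivity) hR.le he, div_le_iff₀' hγ] at hthr
  rw [Real.rpow_add hR, mul_left_comm, mul_comm c]
  exact mul_le_mul_of_nonneg_left hthr (by positivity)

theorem abs_inner_le_abs_inner_add_norm_sub_mul {V : Type*} [NormedAddCommGroup V]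
    [InnerProductSpace ℝ V] (u v w : V) : |⟪u, w⟫| ≤ |⟪v, w⟫| + ‖u - v‖ * ‖w‖ := by
  have hdiff : |⟪u, w⟫| - |⟪v, w⟫| ≤ |⟪u - v, w⟫| := by
    rw [inner_sub_left]
    exact abs_sub_abs_le_abs_sub _ _
  linarith [abs_real_inner_le_norm (u - v) w]

theorem bddAbove_norm_fderiv_sphere {ω : E2 → E2} (hω : ContDiffOn ℝ 1 ω {(0 : E2)}ᶜ) :
    BddAbove {c : ℝ | ∃ u : E2, ‖u‖ = 1 ∧ c = ‖fderiv ℝ ω u‖} := by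
  have hset : {c : ℝ | ∃ u : E2, ‖u‖ = 1 ∧ c = ‖fderiv ℝ ω u‖} =
      (fun u => ‖fderiv ℝ ω u‖) '' Metric.sphere 0 1 := by
    ext c
    simp [eq_comm]
  rw [hset]
  refine (isCompact_sphere (0 : E2) 1).bddAbove_image
    ((hω.continuousOn_fderiv_of_isOpen isOpen_compl_singleton le_rfl).norm.mono ?_)
  intro x hx h0
  simp_all

theorem norm_fderiv_le_supDeriv {ω : E2 → E2} (hω : ContDiffOn ℝ 1 ω {(0 : E2)}ᶜ) {u : E2}
    (hu : ‖u‖ = 1) : ‖fderiv ℝ ω u‖ ≤ supDeriv ω :=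
  le_csSup (bddAbove_norm_fderiv_sphere hω) ⟨u, hu, rfl⟩

theorem supDeriv_nonneg {ω : E2 → E2} (hω : ContDiffOn ℝ 1 ω {(0 : E2)}ᶜ) : 0 ≤ supDeriv ω :=
  (norm_nonneg _).trans (norm_fderiv_le_supDeriv hω (u := EuclideanSpace.single 0 1) (by simp))

theorem stmt10_general (M δ γ r : ℝ) (hM0 : 0 < M) (hM1 : M < 1)
    (hδ0 : 0 ≤ δ) (hγ : 0 < γ) (hr' : r ≤ 1 / 2)
    (ω : E2 → E2) (hω : ContDiffOn ℝ 1 ω {(0 : E2)}ᶜ)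
    (hhom : ∀ lam : ℝ, 0 < lam → ∀ a : E2, a ≠ 0 → ω (lam • a) = lam ^ M • ω a) :
    ∀ k : Fin 2 → ℤ, k ≠ 0 → ∀ a abar : E2,
      ‖a - abar‖ ≤ r →
      max 1 ((2 * supDeriv ω * r / γ) ^ (1 / (δ + 1 - M))) ≤ ‖a‖ →
      |⟪ω abar, kv k⟫| ≤ γ * ‖kv k‖ * ‖abar‖ ^ δ →
      |⟪ω a, kv k⟫| ≤ 2 ^ (δ + 1) * γ * ‖kv k‖ * ‖a‖ ^ δ := by
  intro k _ a abar hclose hlarge hres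
  obtain ⟨hR1, hthr⟩ := max_le_iff.mp hlarge
  have hR : 0 < ‖a‖ := one_pos.trans_le hR1
  have hr0 : 0 ≤ r := (norm_nonneg _).trans hclose
  have hC0 := supDeriv_nonneg hω
  have hdiff : DifferentiableOn ℝ ω {0}ᶜ := hω.differentiableOn one_ne_zero
  have hω_close : ‖ω a - ω abar‖ ≤ γ * ‖a‖ ^ δ :=
    calc ‖ω a - ω abar‖ ≤ supDeriv ω * (‖a‖ - r) ^ (M - 1) * r :=
          norm_sub_le_of_norm_fderiv_le_mul_rpow hdiff hM1.le hC0
            (fun x hx => norm_fderiv_le_mul_rpow_of_homogeneous hdiff hhom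
              (fun u hu => norm_fderiv_le_supDeriv hω hu) hx) hclose (by linarith)
      _ ≤ supDeriv ω * (2 * ‖a‖ ^ (M - 1)) * r := by
          gcongr
          exact rpow_sub_le_two_mul_rpow (by linarith) hR hM0.le hM1.le
      _ = 2 * supDeriv ω * r * ‖a‖ ^ (M - 1) := by ring
      _ ≤ γ * ‖a‖ ^ δ := by
          simpa using mul_rpow_le_of_rpow_inv_le (by positivity) hγ hR (by linarith) hthr (M - 1)
  have habar : ‖abar‖ ^ δ ≤ 2 ^ δ * ‖a‖ ^ δ := by
    rw [← Real.mul_rpow zero_le_two hR.le]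
    gcongr
    linarith [norm_le_norm_add_norm_sub' abar a, norm_sub_rev a abar]
  have h2δ : 1 ≤ (2 : ℝ) ^ δ := Real.one_le_rpow one_le_two hδ0
  calc |⟪ω a, kv k⟫| ≤ |⟪ω abar, kv k⟫| + ‖ω a - ω abar‖ * ‖kv k‖ :=
        abs_inner_le_abs_inner_add_norm_sub_mul _ _ _
    _ ≤ γ * ‖kv k‖ * (2 ^ δ * ‖a‖ ^ δ) + γ * ‖a‖ ^ δ * ‖kv k‖ := by
        gcongr
        exact hres.trans (by gcongr)
    _ ≤ 2 ^ (δ + 1) * γ * ‖kv k‖ * ‖a‖ ^ δ := by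
        rw [Real.rpow_add_one two_ne_zero]
        nlinarith [mul_nonneg (mul_nonneg hγ.le (norm_nonneg (kv k))) (Real.rpow_nonneg hR.le δ)]

/-- At points of large enough norm, the `r`-enlargement of the resonant set
`{a : |ω(a)·k| ≤ γ‖k‖‖a‖^δ}` is contained in the resonant set with parameter `2^{δ+1}γ`. -/
theorem stmt10 (M δ γ r : ℝ) (hM0 : 0 < M) (hM1 : M < 1)
    (hδ0 : 0 ≤ δ) (hδM : δ < M) (hγ : 0 < γ) (hr : 0 < r) (hr' : r ≤ 1 / 2)
    (ω : E2 → E2) (hω : ContDiffOn ℝ 1 ω {(0 : E2)}ᶜ)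
    (hhom : ∀ lam : ℝ, 0 < lam → ∀ a : E2, a ≠ 0 → ω (lam • a) = lam ^ M • ω a) :
    ∀ k : Fin 2 → ℤ, k ≠ 0 → ∀ a abar : E2,
      ‖a - abar‖ ≤ r →
      max 1 ((2 * supDeriv ω * r / γ) ^ (1 / (δ + 1 - M))) ≤ ‖a‖ →
      |⟪ω abar, kv k⟫| ≤ γ * ‖kv k‖ * ‖abar‖ ^ δ →
      |⟪ω a, kv k⟫| ≤ 2 ^ (δ + 1) * γ * ‖kv k‖ * ‖a‖ ^ δ :=
  stmt10_general M δ γ r hM0 hM1 hδ0 hγ hr' ω hω hhom
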